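/- arXiv:2605.12432 — 2 statements merged into one kernel-verified Lean document; each statement's English description precedes it below -/
import Mathlib

section
/- (Deterministic bound on the error term B) Let f_1,…,f_q : ℝⁿ → ℝ be differentiable with L-Lipschitz gradients and ‖∇f_k(x)‖ ≤ σ for all k and all x; let m ∈ ℕ^q, p = Σ_k m_k ≥ 1, F_m = Σ_k (m_k/p) f_k, let σ be a permutation of {1,…,s}, let π : {0,…,p−1} → {1,…,q} satisfy |π⁻¹(k)| = m_k for all k, let x*, x₀ ∈ ℝⁿ with ‖x₀ − x*‖ ≤ Δ, and let y_{i,j} ∈ ℝⁿ (i = 0,…,s−1; j = 0,…,p−1) be arbitrary points. Then | p ⟨x₀ − x*, ∇F_m(x₀)⟩ − Σ_{i=0}^{s−1} Σ_{j=0}^{p−1} ⟨ y_{i,j} − x*, U_{σ(i+1)} ∇_{σ(i+1)} f_{π(j)}(y_{i,j}) ⟩ | ≤ (ΔL + σ) Σ_{i=0}^{s−1} Σ_{j=0}^{p−1} ‖x₀ − y_{i,j}‖. -/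
open MeasureTheory Finset
open scoped RealInnerProductSpace BigOperators

/-!
Write `P_i` for the projection onto block `σ(i+1)`. Since the `P_i` sum to the identity and `π`
hits each `k` exactly `m_k` times, `p ∇F_m(x₀) = ∑_j ∇f_{π(j)}(x₀)`, so the first term of `B`
equals `∑_i ∑_j ⟨x₀ − x*, P_i ∇f_{π(j)}(x₀)⟩`, and `B` is a double sum of differences
`⟨x₀ − x*, P_i u⟩ − ⟨y_{i,j} − x*, P_i w⟩` with `u, w` the gradients of `f_{π(j)}` at `x₀` and
`y_{i,j}`. Such a difference is `⟨x₀ − x*, P_i (u − w)⟩ + ⟨x₀ − y_{i,j}, P_i w⟩`, and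
Cauchy–Schwarz with `‖P_i‖ ≤ 1` bounds it by `(ΔL + σ) ‖x₀ − y_{i,j}‖`.
-/

/-- The orthogonal projection `U_b * U_bᵀ` onto the coordinates of block `b`,
where `blk` assigns each coordinate to its block; so for a differentiable `h`,
`blockProj blk b (gradient h x)` represents `U_b ∇_b h(x)`, and block-gradient norms
and inner products can be expressed through it. -/
noncomputable def blockProj {n s : ℕ} (blk : Fin n → Fin s) (b : Fin s)
    (v : EuclideanSpace ℝ (Fin n)) : EuclideanSpace ℝ (Fin n) :=
  WithLp.toLp 2 (fun k => if blk k = b then v k else 0)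

section BlockProj

variable {n s : ℕ} (blk : Fin n → Fin s)

lemma sum_blockProj (v : EuclideanSpace ℝ (Fin n)) : ∑ b, blockProj blk b v = v := by
  ext k
  simp [blockProj, WithLp.ofLp_sum, Finset.sum_apply]

lemma blockProj_sub (b : Fin s) (u w : EuclideanSpace ℝ (Fin n)) :
    blockProj blk b (u - w) = blockProj blk b u - blockProj blk b w := by
  ext k
  by_cases h : blk k = b <;> simp [blockProj, h]

lemma norm_blockProj_le (b : Fin s) (v : EuclideanSpace ℝ (Fin n)) :
    ‖blockProj blk b v‖ ≤ ‖v‖ := by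
  rw [EuclideanSpace.norm_eq, EuclideanSpace.norm_eq]
  refine Real.sqrt_le_sqrt (Finset.sum_le_sum fun k _ => ?_)
  by_cases h : blk k = b <;> simp [blockProj, h, sq_nonneg]

end BlockProj

section InnerProductSpace

variable {E : Type*} [NormedAddCommGroup E] [InnerProductSpace ℝ E]

lemma abs_inner_sub_inner_le (x y z u w : E) :
    |⟪x - z, u⟫ - ⟪y - z, w⟫| ≤ ‖x - z‖ * ‖u - w‖ + ‖x - y‖ * ‖w‖ := by
  have hsplit : ⟪x - z, u⟫ - ⟪y - z, w⟫ = ⟪x - z, u - w⟫ + ⟪x - y, w⟫ := by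
    simp only [inner_sub_left, inner_sub_right]
    ring
  rw [hsplit]
  exact (abs_add_le _ _).trans
    (add_le_add (abs_real_inner_le_norm _ _) (abs_real_inner_le_norm _ _))

variable [CompleteSpace E]

lemma gradient_sum_const_mul {ι : Type*} (t : Finset ι) (c : ι → ℝ) (f : ι → E → ℝ)
    {x : E} (hf : ∀ k ∈ t, DifferentiableAt ℝ (f k) x) :
    gradient (fun x => ∑ k ∈ t, c k * f k x) x = ∑ k ∈ t, c k • gradient (f k) x := by
  have hsum : HasGradientAt (fun x => ∑ k ∈ t, c k * f k x)
      ((InnerProductSpace.toDual ℝ E).symm (∑ k ∈ t, c k • fderiv ℝ (f k) x)) x :=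
    hasFDerivAt_iff_hasGradientAt.mp
      (HasFDerivAt.fun_sum fun k hk => (hf k hk).hasFDerivAt.const_mul (c k))
  rw [hsum.gradient, map_sum]
  simp only [map_smul]
  rfl

lemma smul_gradient_sum_card_fiber_div {ι κ : Type*} [Fintype κ] [DecidableEq κ]
    (f : κ → E → ℝ) {x : E} (hf : ∀ k, DifferentiableAt ℝ (f k) x) (t : Finset ι)
    (π : ι → κ) {p : ℝ} (hp : p ≠ 0) :
    p • gradient (fun x => ∑ k, (#{j ∈ t | π j = k} : ℝ) / p * f k x) x =
      ∑ j ∈ t, gradient (f (π j)) x := by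
  rw [gradient_sum_const_mul _ _ _ fun k _ => hf k, Finset.smul_sum,
    ← Finset.sum_fiberwise' t π fun k => gradient (f k) x]
  refine Finset.sum_congr rfl fun k _ => ?_
  rw [smul_smul, mul_div_cancel₀ _ hp, Finset.sum_const, Nat.cast_smul_eq_nsmul]

end InnerProductSpace

lemma abs_inner_blockProj_sub_le {n s : ℕ} (blk : Fin n → Fin s) (b : Fin s)
    {L σv Δ : ℝ} {x₀ xstar y u w : EuclideanSpace ℝ (Fin n)} (hΔ : ‖x₀ - xstar‖ ≤ Δ)
    (hu : ‖u - w‖ ≤ L * ‖x₀ - y‖) (hw : ‖w‖ ≤ σv) :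
    |⟪x₀ - xstar, blockProj blk b u⟫ - ⟪y - xstar, blockProj blk b w⟫| ≤
      (Δ * L + σv) * ‖x₀ - y‖ := by
  have hPu : ‖blockProj blk b u - blockProj blk b w‖ ≤ L * ‖x₀ - y‖ := by
    rw [← blockProj_sub]
    exact (norm_blockProj_le _ _ _).trans hu
  calc _ ≤ ‖x₀ - xstar‖ * ‖blockProj blk b u - blockProj blk b w‖ +
          ‖x₀ - y‖ * ‖blockProj blk b w‖ := abs_inner_sub_inner_le _ _ _ _ _
    _ ≤ Δ * (L * ‖x₀ - y‖) + ‖x₀ - y‖ * σv := by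
      gcongr
      · exact (norm_nonneg _).trans hΔ
      · exact (norm_blockProj_le _ _ _).trans hw
    _ = (Δ * L + σv) * ‖x₀ - y‖ := by ring

theorem errorTermB_deterministic_bound_general
    -- problem data: `n` variables partitioned into `s` blocks by `blk`,
    -- `q` objectives `f k`, frequency vector `wt` with budget `p = ∑ k, wt k`,
    -- weighted-sum function `Fm`, block permutation `σb`, index mapping `π`
    {n s q : ℕ} (blk : Fin n → Fin s)
    (f : Fin q → EuclideanSpace ℝ (Fin n) → ℝ)
    (wt : Fin q → ℕ) (p : ℕ) (hp1 : 1 ≤ p)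
    (Fm : EuclideanSpace ℝ (Fin n) → ℝ)
    (hFm : ∀ x, Fm x = ∑ k, ((wt k : ℝ) / (p : ℝ)) * f k x)
    (σb : Equiv.Perm (Fin s)) (π : ℕ → Fin q)
    (hπ : ∀ k, ((Finset.range p).filter (fun j => π j = k)).card = wt k)
    (L σv Δ : ℝ)
    (hdiff : ∀ k, Differentiable ℝ (f k))
    (hLip : ∀ k x y, ‖gradient (f k) x - gradient (f k) y‖ ≤ L * ‖x - y‖)
    (hgb : ∀ k x, ‖gradient (f k) x‖ ≤ σv)
    (xstar x₀ : EuclideanSpace ℝ (Fin n)) (hΔ : ‖x₀ - xstar‖ ≤ Δ)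
    (y : Fin s → ℕ → EuclideanSpace ℝ (Fin n)) :
    |(p : ℝ) * ⟪x₀ - xstar, gradient Fm x₀⟫ -
        ∑ i : Fin s, ∑ j ∈ Finset.range p,
          ⟪y i j - xstar, blockProj blk (σb i) (gradient (f (π j)) (y i j))⟫| ≤
      (Δ * L + σv) * ∑ i : Fin s, ∑ j ∈ Finset.range p, ‖x₀ - y i j‖ := by
  have hFm' : Fm = fun x => ∑ k, (#{j ∈ range p | π j = k} : ℝ) / p * f k x := by
    funext x
    simp only [hFm, hπ]
  have hfirst : (p : ℝ) * ⟪x₀ - xstar, gradient Fm x₀⟫ = ∑ i : Fin s, ∑ j ∈ range p,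
      ⟪x₀ - xstar, blockProj blk (σb i) (gradient (f (π j)) x₀)⟫ := by
    rw [← real_inner_smul_right, hFm', smul_gradient_sum_card_fiber_div f (fun k => hdiff k x₀)
      _ π (Nat.cast_ne_zero.mpr (Nat.one_le_iff_ne_zero.mp hp1)), inner_sum, Finset.sum_comm]
    refine Finset.sum_congr rfl fun j _ => ?_
    rw [← inner_sum, Equiv.sum_comp σb fun b => blockProj blk b _, sum_blockProj]
  rw [hfirst]
  simp only [Finset.mul_sum, ← Finset.sum_sub_distrib]
  refine (Finset.abs_sum_le_sum_abs _ _).trans (Finset.sum_le_sum fun i _ => ?_)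
  refine (Finset.abs_sum_le_sum_abs _ _).trans (Finset.sum_le_sum fun j _ => ?_)
  exact abs_inner_blockProj_sub_le blk (σb i) hΔ (hLip _ _ _) (hgb _ _)

/-- Deterministic bound on the error term `B`:
`|p ⟨x₀ − x*, ∇F_m(x₀)⟩ − ∑_i ∑_j ⟨y_{i,j} − x*, U_{σ(i+1)} ∇_{σ(i+1)} f_{π(j)}(y_{i,j})⟩|
  ≤ (ΔL + σ) ∑_i ∑_j ‖x₀ − y_{i,j}‖`. -/
theorem errorTermB_deterministic_bound
    -- problem data: `n` variables partitioned into `s` blocks by `blk`,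
    -- `q` objectives `f k`, frequency vector `wt` with budget `p = ∑ k, wt k`,
    -- weighted-sum function `Fm`, block permutation `σb`, index mapping `π`
    {n s q : ℕ} (blk : Fin n → Fin s)
    (f : Fin q → EuclideanSpace ℝ (Fin n) → ℝ)
    (wt : Fin q → ℕ) (p : ℕ) (hp : p = ∑ k, wt k) (hp1 : 1 ≤ p)
    (Fm : EuclideanSpace ℝ (Fin n) → ℝ)
    (hFm : ∀ x, Fm x = ∑ k, ((wt k : ℝ) / (p : ℝ)) * f k x)
    (σb : Equiv.Perm (Fin s)) (π : ℕ → Fin q)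
    (hπ : ∀ k, ((Finset.range p).filter (fun j => π j = k)).card = wt k)
    (L σv Δ : ℝ)
    (hdiff : ∀ k, Differentiable ℝ (f k))
    (hLip : ∀ k x y, ‖gradient (f k) x - gradient (f k) y‖ ≤ L * ‖x - y‖)
    (hgb : ∀ k x, ‖gradient (f k) x‖ ≤ σv)
    (xstar x₀ : EuclideanSpace ℝ (Fin n)) (hΔ : ‖x₀ - xstar‖ ≤ Δ)
    (y : Fin s → ℕ → EuclideanSpace ℝ (Fin n)) :
    |(p : ℝ) * ⟪x₀ - xstar, gradient Fm x₀⟫ -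
        ∑ i : Fin s, ∑ j ∈ Finset.range p,
          ⟪y i j - xstar, blockProj blk (σb i) (gradient (f (π j)) (y i j))⟫| ≤
      (Δ * L + σv) * ∑ i : Fin s, ∑ j ∈ Finset.range p, ‖x₀ - y i j‖ :=
  errorTermB_deterministic_bound_general blk f wt p hp1 Fm hFm σb π hπ L σv Δ hdiff hLip hgb xstar
    x₀ hΔ y
end

section
/- (PL recursion lemma) Let μ, L, σ, p, s > 0 and let e : ℕ → ℝ be a nonnegative sequence satisfying, for every t ≥ 0 with α_t = 2/(μ(t+1)), the inequality e_{t+1} ≤ (1 − α_t μ) e_t + α_t² L σ² p² ( s + L α_t s³ / 3 ). Then for every integer T ≥ 1, e_T ≤ 4 L σ² p² (3μs + 2Ls³) / (3 T μ³). -/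
/-- PL recursion lemma: if a nonnegative sequence `e` satisfies
`e (t+1) ≤ (1 − α_t μ) e t + α_t² L σ² p² (s + L α_t s³/3)` with `α_t = 2/(μ(t+1))`,
then `e T ≤ 4 L σ² p² (3μs + 2Ls³) / (3 T μ³)` for every `T ≥ 1`. -/
theorem PL_recursion_lemma
    (μ L σv p s : ℝ) (hμ : 0 < μ) (hL : 0 < L) (hσ : 0 < σv) (hp : 0 < p) (hs : 0 < s)
    (e : ℕ → ℝ) (he : ∀ t, 0 ≤ e t)
    (α : ℕ → ℝ) (hα : ∀ t, α t = 2 / (μ * ((t : ℝ) + 1)))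
    (hrec : ∀ t, e (t + 1) ≤
      (1 - α t * μ) * e t + (α t) ^ 2 * L * σv ^ 2 * p ^ 2 * (s + L * α t * s ^ 3 / 3)) :
    ∀ T : ℕ, 1 ≤ T →
      e T ≤ 4 * L * σv ^ 2 * p ^ 2 * (3 * μ * s + 2 * L * s ^ 3) / (3 * (T : ℝ) * μ ^ 3) := by
  have hμ' : μ ≠ 0 := hμ.ne'
  intro T hT
  induction T, hT using Nat.le_induction with
  | base =>
    have h0 := hrec 0
    have hα0 : α 0 = 2 / μ := by rw [hα]; norm_num
    rw [hα0] at h0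
    have hc : 1 - 2 / μ * μ = -1 := by field_simp; ring
    rw [hc] at h0
    have heq : (2 / μ) ^ 2 * L * σv ^ 2 * p ^ 2 * (s + L * (2 / μ) * s ^ 3 / 3)
        = 4 * L * σv ^ 2 * p ^ 2 * (3 * μ * s + 2 * L * s ^ 3) / (3 * ((1 : ℕ) : ℝ) * μ ^ 3) := by
      field_simp
      ring
    rw [heq] at h0
    linarith [he 0]
  | succ n hn ih =>
    have hN : (1:ℝ) ≤ (n:ℝ) := by exact_mod_cast hn
    set N : ℝ := (n:ℝ) with hNdef
    have hNpos : 0 < N := by linarith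
    have hN1 : 0 < N + 1 := by linarith
    have hrecn := hrec n
    rw [hα n] at hrecn
    have hcoef : 1 - 2 / (μ * (N + 1)) * μ = (N - 1) / (N + 1) := by
      field_simp
      ring
    rw [hcoef] at hrecn
    have hcoefnn : 0 ≤ (N - 1) / (N + 1) := by
      apply div_nonneg <;> linarith
    have h2 : (N - 1) / (N + 1) * e n ≤ (N - 1) / (N + 1) *
        (4 * L * σv ^ 2 * p ^ 2 * (3 * μ * s + 2 * L * s ^ 3) / (3 * N * μ ^ 3)) :=
      mul_le_mul_of_nonneg_left ih hcoefnn
    have hdiff : 4 * L * σv ^ 2 * p ^ 2 * (3 * μ * s + 2 * L * s ^ 3) / (3 * (N + 1) * μ ^ 3)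
        - ((N - 1) / (N + 1) *
            (4 * L * σv ^ 2 * p ^ 2 * (3 * μ * s + 2 * L * s ^ 3) / (3 * N * μ ^ 3))
          + (2 / (μ * (N + 1))) ^ 2 * L * σv ^ 2 * p ^ 2 *
            (s + L * (2 / (μ * (N + 1))) * s ^ 3 / 3))
        = 4 * L * σv ^ 2 * p ^ 2 * s / (μ ^ 2 * N * (N + 1) ^ 2)
          + 8 * L ^ 2 * σv ^ 2 * p ^ 2 * s ^ 3 * (N ^ 2 + N + 1) / (3 * μ ^ 3 * N * (N + 1) ^ 3) := by
      field_simp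
      ring
    have hpos1 : 0 ≤ 4 * L * σv ^ 2 * p ^ 2 * s / (μ ^ 2 * N * (N + 1) ^ 2) := by positivity
    have hpos2 : 0 ≤ 8 * L ^ 2 * σv ^ 2 * p ^ 2 * s ^ 3 * (N ^ 2 + N + 1) /
        (3 * μ ^ 3 * N * (N + 1) ^ 3) := by positivity
    have hcast : ((n + 1 : ℕ) : ℝ) = N + 1 := by push_cast; ring
    rw [hcast]
    linarith [hrecn, h2, hdiff]
end
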